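/- arXiv:2301.11481 — 2 statements merged into one kernel-verified Lean document; each statement's English description precedes it below -/
import Mathlib

section
/- The Nash-equilibrium exploitability is Lipschitz in the strategy: for any two product strategies σ, σ' and any payoff u with values in [0,1], |E(σ, u) − E(σ', u)| ≤ 2n‖σ − σ'‖, where ‖σ − σ'‖ = max_i Σ_{a_i} |σ_i(a_i) − σ'_i(a_i)| and E(σ,u) = max_{i, a_i} (u_i(a_i, σ_{-i}) − u_i(σ)). -/
open Finset

variable {ι : Type*} [Fintype ι] [DecidableEq ι]
variable {A : ι → Type*} [∀ i, Fintype (A i)] [∀ i, DecidableEq (A i)]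

/-- A (mixed) strategy / distribution on a finite set. -/
def IsDist {α : Type*} [Fintype α] (σ : α → ℝ) : Prop :=
  (∀ b, 0 ≤ σ b) ∧ ∑ b, σ b = 1

/-- Expected utility of player `j` under product strategy `σ`. -/
def EU (u : ι → (∀ i, A i) → ℝ) (σ : ∀ i, A i → ℝ) (j : ι) : ℝ :=
  ∑ a : ∀ i, A i, u j a * ∏ k, σ k (a k)

/-- The point-mass (pure) strategy on action `b`. -/
def pureStrat {α : Type*} [DecidableEq α] (b : α) : α → ℝ :=
  fun c => if c = b then 1 else 0

/-- `u_i(b, σ_{-i})`: player `i` deviates to pure action `b`. -/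
def BR (u : ι → (∀ i, A i) → ℝ) (σ : ∀ i, A i → ℝ) (i : ι) (b : A i) : ℝ :=
  EU u (Function.update σ i (pureStrat b)) i

variable [Nonempty ι] [∀ i, Nonempty (A i)]

/-- NE exploitability `E(σ,u) = max_{i,a_i} (u_i(a_i, σ_{-i}) - u_i(σ))`. -/
noncomputable def NEExpl (u : ι → (∀ i, A i) → ℝ) (σ : ∀ i, A i → ℝ) : ℝ :=
  univ.sup' Finset.univ_nonempty fun i =>
    univ.sup' Finset.univ_nonempty fun b : A i => BR u σ i b - EU u σ i

lemma pureStrat_isDist {α : Type*} [Fintype α] [DecidableEq α] (b : α) :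
    IsDist (pureStrat b) := by
  constructor
  · intro c; unfold pureStrat; split <;> norm_num
  · simp [pureStrat]

/-- Hybrid argument: total variation of products bounded by sum of TVs. -/
lemma sum_abs_prod_sub_prod (f g : ∀ i, A i → ℝ) (hf : ∀ i, IsDist (f i))
    (hg : ∀ i, IsDist (g i)) :
    ∑ a : ∀ i, A i, |∏ k, f k (a k) - ∏ k, g k (a k)| ≤ ∑ k, ∑ b, |f k b - g k b| := by
  suffices H : ∀ s : Finset ι,
      ∑ a : ∀ i, A i, |∏ k, (if k ∈ s then f k else g k) (a k) - ∏ k, g k (a k)|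
        ≤ ∑ k ∈ s, ∑ b, |f k b - g k b| by
    simpa using H univ
  intro s
  induction s using Finset.induction_on with
  | empty => simp
  | @insert i s hi ih =>
    set h : ∀ k, A k → ℝ := fun k => if k ∈ s then f k else g k with hh
    have hpos : ∀ k b, 0 ≤ h k b := by
      intro k b; simp only [hh]; split
      · exact (hf k).1 b
      · exact (hg k).1 b
    have hsum : ∀ k, ∑ b, h k b = 1 := by
      intro k; simp only [hh]; split
      · exact (hf k).2
      · exact (hg k).2
    have hstep : ∀ a : ∀ i, A i,
        (∏ k, (if k ∈ insert i s then f k else g k) (a k)) - ∏ k, h k (a k)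
          = (f i (a i) - g i (a i)) * ∏ k ∈ univ.erase i, h k (a k) := by
      intro a
      have h1 : ∏ k, (if k ∈ insert i s then f k else g k) (a k)
          = f i (a i) * ∏ k ∈ univ.erase i, h k (a k) := by
        rw [← Finset.mul_prod_erase univ _ (mem_univ i)]
        simp only [mem_insert, true_or, if_pos]
        congr 1
        refine Finset.prod_congr rfl fun k hk => ?_
        have : k ≠ i := (Finset.mem_erase.mp hk).1
        simp [hh, this]
      have h2 : ∏ k, h k (a k) = g i (a i) * ∏ k ∈ univ.erase i, h k (a k) := by
        rw [← Finset.mul_prod_erase univ _ (mem_univ i)]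
        simp [hh, hi]
      rw [h1, h2]; ring
    calc ∑ a : ∀ i, A i, |∏ k, (if k ∈ insert i s then f k else g k) (a k) - ∏ k, g k (a k)|
        ≤ ∑ a : ∀ i, A i,
            (|(f i (a i) - g i (a i)) * ∏ k ∈ univ.erase i, h k (a k)|
              + |∏ k, h k (a k) - ∏ k, g k (a k)|) := by
          refine Finset.sum_le_sum fun a _ => ?_
          calc |∏ k, (if k ∈ insert i s then f k else g k) (a k) - ∏ k, g k (a k)|
              = |((∏ k, (if k ∈ insert i s then f k else g k) (a k)) - ∏ k, h k (a k))
                  + (∏ k, h k (a k) - ∏ k, g k (a k))| := by ring_nf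
            _ ≤ _ := by rw [hstep a]; exact abs_add_le _ _
      _ = (∑ a : ∀ i, A i, |(f i (a i) - g i (a i)) * ∏ k ∈ univ.erase i, h k (a k)|)
            + ∑ a : ∀ i, A i, |∏ k, h k (a k) - ∏ k, g k (a k)| := Finset.sum_add_distrib
      _ ≤ (∑ b, |f i b - g i b|) + ∑ k ∈ s, ∑ b, |f k b - g k b| := by
          refine add_le_add (le_of_eq ?_) ih
          set D : ∀ k, A k → ℝ :=
            Function.update (fun k => h k) i (fun b => |f i b - g i b|) with hD
          have key : ∀ a : ∀ i, A i,
              |(f i (a i) - g i (a i)) * ∏ k ∈ univ.erase i, h k (a k)|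
                = ∏ k, D k (a k) := by
            intro a
            rw [← Finset.mul_prod_erase univ (fun k => D k (a k)) (mem_univ i)]
            rw [abs_mul]
            congr 1
            · simp [hD]
            · rw [abs_of_nonneg (Finset.prod_nonneg fun k _ => hpos k (a k))]
              refine Finset.prod_congr rfl fun k hk => ?_
              have : k ≠ i := (Finset.mem_erase.mp hk).1
              simp [hD, this]
          rw [Finset.sum_congr rfl fun a _ => key a]
          rw [← Fintype.prod_sum D]
          rw [← Finset.mul_prod_erase univ (fun k => ∑ b, D k b) (mem_univ i)]
          have : ∀ k ∈ univ.erase i, ∑ b, D k b = 1 := by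
            intro k hk
            have hk' : k ≠ i := (Finset.mem_erase.mp hk).1
            simp only [hD, Function.update_of_ne hk']
            exact hsum k
          rw [Finset.prod_congr rfl this]
          simp [hD]
      _ = ∑ k ∈ insert i s, ∑ b, |f k b - g k b| := by rw [Finset.sum_insert hi]

/-- Lipschitz bound for the expected utility. -/
lemma abs_EU_sub_EU (u : ι → (∀ i, A i) → ℝ) (hu : ∀ j a, u j a ∈ Set.Icc (0:ℝ) 1)
    (f g : ∀ i, A i → ℝ) (hf : ∀ i, IsDist (f i)) (hg : ∀ i, IsDist (g i)) (j : ι) :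
    |EU u f j - EU u g j| ≤ ∑ k, ∑ b, |f k b - g k b| := by
  have : EU u f j - EU u g j
      = ∑ a : ∀ i, A i, u j a * (∏ k, f k (a k) - ∏ k, g k (a k)) := by
    unfold EU; rw [← Finset.sum_sub_distrib]
    exact Finset.sum_congr rfl fun a _ => by ring
  rw [this]
  calc |∑ a : ∀ i, A i, u j a * (∏ k, f k (a k) - ∏ k, g k (a k))|
      ≤ ∑ a : ∀ i, A i, |u j a * (∏ k, f k (a k) - ∏ k, g k (a k))| :=
        Finset.abs_sum_le_sum_abs _ _
    _ ≤ ∑ a : ∀ i, A i, |∏ k, f k (a k) - ∏ k, g k (a k)| := by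
        refine Finset.sum_le_sum fun a _ => ?_
        rw [abs_mul]
        have h1 : |u j a| ≤ 1 := by
          rw [abs_of_nonneg (hu j a).1]; exact (hu j a).2
        nlinarith [abs_nonneg (∏ k, f k (a k) - ∏ k, g k (a k))]
    _ ≤ _ := sum_abs_prod_sub_prod f g hf hg

/-- NE exploitability is `2n`-Lipschitz in the product strategy, in
the norm `‖σ - σ'‖ = max_i Σ_{a_i} |σ_i(a_i) - σ'_i(a_i)|`. -/
theorem NE_exploitability_lipschitz
    (u : ι → (∀ i, A i) → ℝ) (hu : ∀ j a, u j a ∈ Set.Icc (0:ℝ) 1)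
    (σ σ' : ∀ i, A i → ℝ) (hσ : ∀ i, IsDist (σ i)) (hσ' : ∀ i, IsDist (σ' i)) :
    |NEExpl u σ - NEExpl u σ'| ≤
      2 * (Fintype.card ι) *
        (univ.sup' Finset.univ_nonempty fun j => ∑ b : A j, |σ j b - σ' j b|) := by
  set M : ℝ := univ.sup' Finset.univ_nonempty fun j => ∑ b : A j, |σ j b - σ' j b| with hM
  set n : ℝ := (Fintype.card ι : ℝ) with hn
  have hMk : ∀ k, ∑ b, |σ k b - σ' k b| ≤ M :=
    fun k => Finset.le_sup' (fun j => ∑ b : A j, |σ j b - σ' j b|) (mem_univ k)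
  have hM0 : 0 ≤ M := by
    obtain ⟨k⟩ := ‹Nonempty ι›
    exact le_trans (Finset.sum_nonneg fun b _ => abs_nonneg _) (hMk k)
  -- EU part
  have hEU : ∀ j, |EU u σ j - EU u σ' j| ≤ n * M := by
    intro j
    refine le_trans (abs_EU_sub_EU u hu σ σ' hσ hσ' j) ?_
    calc ∑ k, ∑ b, |σ k b - σ' k b| ≤ (univ : Finset ι).card • M :=
          Finset.sum_le_card_nsmul _ _ M fun k _ => hMk k
      _ = n * M := by simp [hn, nsmul_eq_mul]
  -- BR part
  have hBR : ∀ i (b : A i), |BR u σ i b - BR u σ' i b| ≤ n * M := by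
    intro i b
    have hfd : ∀ k, IsDist (Function.update σ i (pureStrat b) k) := by
      intro k
      rcases eq_or_ne k i with rfl | hki
      · rw [Function.update_self]; exact pureStrat_isDist b
      · rw [Function.update_of_ne hki]; exact hσ k
    have hgd : ∀ k, IsDist (Function.update σ' i (pureStrat b) k) := by
      intro k
      rcases eq_or_ne k i with rfl | hki
      · rw [Function.update_self]; exact pureStrat_isDist b
      · rw [Function.update_of_ne hki]; exact hσ' k
    refine le_trans (abs_EU_sub_EU u hu _ _ hfd hgd i) ?_
    calc ∑ k, ∑ c, |Function.update σ i (pureStrat b) k c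
            - Function.update σ' i (pureStrat b) k c|
        ≤ (univ : Finset ι).card • M := by
          refine Finset.sum_le_card_nsmul _ _ M fun k _ => ?_
          rcases eq_or_ne k i with rfl | hki
          · simp [hM0]
          · rw [Function.update_of_ne hki, Function.update_of_ne hki]
            exact hMk k
      _ = n * M := by simp [hn, nsmul_eq_mul]
  have key : ∀ i (b : A i),
      |(BR u σ i b - EU u σ i) - (BR u σ' i b - EU u σ' i)| ≤ 2 * n * M := by
    intro i b
    have : (BR u σ i b - EU u σ i) - (BR u σ' i b - EU u σ' i)
        = (BR u σ i b - BR u σ' i b) - (EU u σ i - EU u σ' i) := by ring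
    rw [this]
    calc |(BR u σ i b - BR u σ' i b) - (EU u σ i - EU u σ' i)|
        ≤ |BR u σ i b - BR u σ' i b| + |EU u σ i - EU u σ' i| := abs_sub _ _
      _ ≤ n * M + n * M := add_le_add (hBR i b) (hEU i)
      _ = 2 * n * M := by ring
  rw [abs_sub_le_iff]
  constructor
  · rw [sub_le_iff_le_add]
    unfold NEExpl
    refine Finset.sup'_le _ _ fun i _ => Finset.sup'_le _ _ fun b _ => ?_
    have h1 : BR u σ i b - EU u σ i ≤ 2 * n * M + (BR u σ' i b - EU u σ' i) := by
      have := key i b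
      rw [abs_le] at this; linarith [this.1, this.2]
    refine le_trans h1 (add_le_add_right ?_ _)
    exact le_trans
      (Finset.le_sup' (fun b : A i => BR u σ' i b - EU u σ' i) (mem_univ b))
      (Finset.le_sup'
        (fun i => univ.sup' Finset.univ_nonempty fun b : A i => BR u σ' i b - EU u σ' i)
        (mem_univ i))
  · rw [sub_le_iff_le_add]
    unfold NEExpl
    refine Finset.sup'_le _ _ fun i _ => Finset.sup'_le _ _ fun b _ => ?_
    have h1 : BR u σ' i b - EU u σ' i ≤ 2 * n * M + (BR u σ i b - EU u σ i) := by
      have := key i b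
      rw [abs_le] at this; linarith [this.1, this.2]
    refine le_trans h1 (add_le_add_right ?_ _)
    exact le_trans
      (Finset.le_sup' (fun b : A i => BR u σ i b - EU u σ i) (mem_univ b))
      (Finset.le_sup'
        (fun i => univ.sup' Finset.univ_nonempty fun b : A i => BR u σ i b - EU u σ i)
        (mem_univ i))
end

section
/- If the payoff distribution D is invariant under each single-player permutation of payoffs, then for every (C)CE approximator f, the orbit-averaged approximator Q f has weakly smaller expected exploitability: E_{u∼D}[E(Qf(u), u)] ≤ E_{u∼D}[E(f(u), u)], where Q = Q_1 ∘ ... ∘ Q_n and Q_i f(u) = (1/|A_i|!) Σ_{ρ_i ∈ G_i} ρ_i^{-1} f(ρ_i u). -/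
set_option maxHeartbeats 1000000


open Finset MeasureTheory

variable {n : ℕ} [NeZero n]
variable {A : Fin n → Type*} [∀ i, Fintype (A i)] [∀ i, DecidableEq (A i)]
  [∀ i, Nonempty (A i)]

/-- Expected utility of player `j` under joint strategy `π`. -/
def JEU (u : Fin n → (∀ i, A i) → ℝ) (π : (∀ i, A i) → ℝ) (j : Fin n) : ℝ :=
  ∑ a : ∀ i, A i, π a * u j a

/-- `u_i(b, π_{-i})`. -/
def JBR (u : Fin n → (∀ i, A i) → ℝ) (π : (∀ i, A i) → ℝ) (i : Fin n) (b : A i) : ℝ :=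
  ∑ a : ∀ i, A i, π a * u i (Function.update a i b)

/-- `Σ_a π(a) u_i(φ_i(a_i), a_{-i})`. -/
def CEdev (u : Fin n → (∀ i, A i) → ℝ) (π : (∀ i, A i) → ℝ) (i : Fin n) (φ : A i → A i) : ℝ :=
  ∑ a : ∀ i, A i, π a * u i (Function.update a i (φ (a i)))

/-- `(ρ_i u)_j(a_i, a_{-i}) = u_j(ρ_i⁻¹ a_i, a_{-i})`. -/
def permPayoff (i : Fin n) (ρ : Equiv.Perm (A i)) (u : Fin n → (∀ i, A i) → ℝ) :
    Fin n → (∀ i, A i) → ℝ :=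
  fun j a => u j (Function.update a i (ρ.symm (a i)))

/-- CCE exploitability. -/
noncomputable def JExpl (u : Fin n → (∀ i, A i) → ℝ) (π : (∀ i, A i) → ℝ) : ℝ :=
  univ.sup' Finset.univ_nonempty fun j =>
    (univ.sup' Finset.univ_nonempty fun b : A j => JBR u π j b) - JEU u π j

/-- CE exploitability. -/
noncomputable def CEExpl (u : Fin n → (∀ i, A i) → ℝ) (π : (∀ i, A i) → ℝ) : ℝ :=
  univ.sup' Finset.univ_nonempty fun j =>
    (univ.sup' Finset.univ_nonempty fun φ : A j → A j => CEdev u π j φ) - JEU u π j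

/-- `Q_i f(u) = (1/|A_i|!) Σ_{ρ_i ∈ G_i} ρ_i⁻¹ f(ρ_i u)`. -/
noncomputable def Qproj (i : Fin n)
    (f : (Fin n → (∀ i, A i) → ℝ) → ((∀ i, A i) → ℝ)) :
    (Fin n → (∀ i, A i) → ℝ) → ((∀ i, A i) → ℝ) :=
  fun u a =>
    (∑ ρ : Equiv.Perm (A i), f (permPayoff i ρ u) (Function.update a i (ρ (a i)))) /
      (Fintype.card (Equiv.Perm (A i)) : ℝ)

/-- `Q = Q_1 ∘ Q_2 ∘ ... ∘ Q_n`. -/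
noncomputable def Qall (f : (Fin n → (∀ i, A i) → ℝ) → ((∀ i, A i) → ℝ)) :
    (Fin n → (∀ i, A i) → ℝ) → ((∀ i, A i) → ℝ) :=
  (List.finRange n).foldr (fun i g => Qproj i g) f

/-! ### Auxiliary definitions -/

def swapUpd (i : Fin n) : (Equiv.Perm (A i)) × (∀ k, Equiv.Perm (A k)) ≃
    (Equiv.Perm (A i)) × (∀ k, Equiv.Perm (A k)) where
  toFun p := (p.2 i, Function.update p.2 i p.1)
  invFun p := (p.2 i, Function.update p.2 i p.1)
  left_inv p := by
    obtain ⟨ρ, σ⟩ := p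
    simp [Prod.ext_iff, Function.update_self, Function.update_idem, Function.update_eq_self]
  right_inv p := by
    obtain ⟨ρ, σ⟩ := p
    simp [Prod.ext_iff, Function.update_self, Function.update_idem, Function.update_eq_self]

def PL (L : List (Fin n)) (ρ : ∀ i, Equiv.Perm (A i)) (u : Fin n → (∀ i, A i) → ℝ) :
    Fin n → (∀ i, A i) → ℝ :=
  fun j a => u j (fun i => if i ∈ L then (ρ i).symm (a i) else a i)

def TL (L : List (Fin n)) (ρ : ∀ i, Equiv.Perm (A i)) (a : ∀ i, A i) : ∀ i, A i :=
  fun i => if i ∈ L then ρ i (a i) else a i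

lemma foldr_Qproj_eq (L : List (Fin n))
    (f : (Fin n → (∀ i, A i) → ℝ) → ((∀ i, A i) → ℝ)) :
    ∀ (_hL : L.Nodup) (u : Fin n → (∀ i, A i) → ℝ) (a : ∀ i, A i),
    L.foldr (fun i g => Qproj i g) f u a
      = (∑ ρ : ∀ i, Equiv.Perm (A i), f (PL L ρ u) (TL L ρ a)) /
        (Fintype.card (∀ i, Equiv.Perm (A i)) : ℝ) := by
  induction L with
  | nil =>
      intro _ u a
      have h1 : ∀ ρ : ∀ i, Equiv.Perm (A i), PL [] ρ u = u := fun ρ => by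
        funext j b; simp [PL]
      have h2 : ∀ ρ : ∀ i, Equiv.Perm (A i), TL ([] : List (Fin n)) ρ a = a := fun ρ => by
        funext i; simp [TL]
      have hN : (Fintype.card (∀ i, Equiv.Perm (A i)) : ℝ) ≠ 0 :=
        Nat.cast_ne_zero.2 Fintype.card_ne_zero
      simp only [List.foldr_nil, h1, h2, Finset.sum_const, Finset.card_univ, nsmul_eq_mul]
      rw [mul_div_cancel_left₀ _ hN]
  | cons i L ih =>
      intro hL u a
      obtain ⟨hiL, hLnd⟩ := List.nodup_cons.mp hL
      have hP : ∀ (ρ : Equiv.Perm (A i)) (σ : ∀ k, Equiv.Perm (A k)),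
          PL L σ (permPayoff i ρ u) = PL (i :: L) (Function.update σ i ρ) u := by
        intro ρ σ
        funext j b
        simp only [PL, permPayoff]
        congr 1
        funext k
        by_cases hk : k = i
        · subst hk
          simp [if_neg hiL, Function.update_self]
        · simp only [Function.update_of_ne hk, List.mem_cons, hk, false_or]
      have hT : ∀ (ρ : Equiv.Perm (A i)) (σ : ∀ k, Equiv.Perm (A k)),
          TL L σ (Function.update a i (ρ (a i))) = TL (i :: L) (Function.update σ i ρ) a := by
        intro ρ σ
        funext k
        simp only [TL]
        by_cases hk : k = i
        · subst hk
          simp [if_neg hiL, Function.update_self]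
        · simp only [Function.update_of_ne hk, List.mem_cons, hk, false_or]
      set F : (∀ k, Equiv.Perm (A k)) → ℝ :=
        fun σ => f (PL (i :: L) σ u) (TL (i :: L) σ a) with hF
      have key : ∑ ρ : Equiv.Perm (A i), ∑ σ : ∀ k, Equiv.Perm (A k),
          F (Function.update σ i ρ)
          = (Fintype.card (Equiv.Perm (A i)) : ℝ) * ∑ σ, F σ := by
        have hstep1 : ∑ p : (Equiv.Perm (A i)) × (∀ k, Equiv.Perm (A k)),
            F (Function.update p.2 i p.1)
            = ∑ ρ : Equiv.Perm (A i), ∑ σ : ∀ k, Equiv.Perm (A k),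
                F (Function.update σ i ρ) := Fintype.sum_prod_type _
        have hstep2 : ∑ p : (Equiv.Perm (A i)) × (∀ k, Equiv.Perm (A k)),
            F (Function.update p.2 i p.1)
            = ∑ p : (Equiv.Perm (A i)) × (∀ k, Equiv.Perm (A k)), F p.2 :=
          Fintype.sum_equiv (swapUpd i) _ _ (fun p => rfl)
        have hstep3 : ∑ p : (Equiv.Perm (A i)) × (∀ k, Equiv.Perm (A k)), F p.2
            = ∑ _ρ : Equiv.Perm (A i), ∑ σ, F σ := Fintype.sum_prod_type _
        rw [← hstep1, hstep2, hstep3, Finset.sum_const, Finset.card_univ, nsmul_eq_mul]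
      show Qproj i (L.foldr (fun i g => Qproj i g) f) u a = _
      simp only [Qproj]
      have hCi : (Fintype.card (Equiv.Perm (A i)) : ℝ) ≠ 0 :=
        Nat.cast_ne_zero.2 Fintype.card_ne_zero
      have hN : (Fintype.card (∀ k, Equiv.Perm (A k)) : ℝ) ≠ 0 :=
        Nat.cast_ne_zero.2 Fintype.card_ne_zero
      calc (∑ ρ : Equiv.Perm (A i),
              L.foldr (fun i g => Qproj i g) f (permPayoff i ρ u)
                (Function.update a i (ρ (a i)))) / (Fintype.card (Equiv.Perm (A i)) : ℝ)
          = (∑ ρ : Equiv.Perm (A i), (∑ σ : ∀ k, Equiv.Perm (A k), F (Function.update σ i ρ)) /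
              (Fintype.card (∀ k, Equiv.Perm (A k)) : ℝ)) /
              (Fintype.card (Equiv.Perm (A i)) : ℝ) := by
            congr 1
            refine Finset.sum_congr rfl fun ρ _ => ?_
            rw [ih hLnd]
            congr 1
            refine Finset.sum_congr rfl fun σ _ => ?_
            rw [hP ρ σ, hT ρ σ]
        _ = (∑ σ, F σ) / (Fintype.card (∀ k, Equiv.Perm (A k)) : ℝ) := by
            rw [← Finset.sum_div, key, div_div,
              mul_comm ((Fintype.card (∀ k, Equiv.Perm (A k)) : ℝ))
                ((Fintype.card (Equiv.Perm (A i)) : ℝ)),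
              mul_div_mul_left _ _ hCi]

/-! ### The full orbit map and its measure invariance -/

def Pfull (ρ : ∀ i, Equiv.Perm (A i)) (u : Fin n → (∀ i, A i) → ℝ) :
    Fin n → (∀ i, A i) → ℝ :=
  fun j a => u j (fun i => (ρ i).symm (a i))

omit [NeZero n] [∀ i, Nonempty (A i)] in
lemma PL_finRange (ρ : ∀ i, Equiv.Perm (A i)) :
    (PL (List.finRange n) ρ : (Fin n → (∀ i, A i) → ℝ) → _) = Pfull ρ := by
  funext u j a
  simp [PL, Pfull, List.mem_finRange]

omit [NeZero n] [∀ i, Nonempty (A i)] in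
lemma TL_finRange (ρ : ∀ i, Equiv.Perm (A i)) (a : ∀ i, A i) :
    TL (List.finRange n) ρ a = fun i => ρ i (a i) := by
  funext i
  simp [TL, List.mem_finRange]

omit [NeZero n] [∀ i, Nonempty (A i)] in
lemma measurable_permPayoff (i : Fin n) (ρ : Equiv.Perm (A i)) :
    Measurable (permPayoff i ρ : (Fin n → (∀ i, A i) → ℝ) → (Fin n → (∀ i, A i) → ℝ)) :=
  measurable_pi_lambda _ fun j => measurable_pi_lambda _ fun a =>
    (measurable_pi_apply _).comp (measurable_pi_apply j)

omit [NeZero n] [∀ i, Nonempty (A i)] in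
lemma measurable_PL (L : List (Fin n)) (ρ : ∀ i, Equiv.Perm (A i)) :
    Measurable (PL L ρ : (Fin n → (∀ i, A i) → ℝ) → (Fin n → (∀ i, A i) → ℝ)) :=
  measurable_pi_lambda _ fun j => measurable_pi_lambda _ fun a =>
    (measurable_pi_apply _).comp (measurable_pi_apply j)

omit [NeZero n] [∀ i, Nonempty (A i)] in
lemma PL_cons (i : Fin n) (L : List (Fin n)) (hiL : i ∉ L) (ρ : ∀ i, Equiv.Perm (A i)) :
    (PL (i :: L) ρ : (Fin n → (∀ i, A i) → ℝ) → _)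
      = (permPayoff i (ρ i)) ∘ (PL L ρ) := by
  funext u j a
  simp only [PL, permPayoff, Function.comp_apply]
  congr 1
  funext k
  by_cases hk : k = i
  · subst hk
    simp [if_neg hiL, Function.update_self]
  · simp only [Function.update_of_ne hk, List.mem_cons, hk, false_or]

omit [NeZero n] [∀ i, Nonempty (A i)] in
lemma map_PL (D : Measure (Fin n → (∀ i, A i) → ℝ))
    (hD : ∀ (i : Fin n) (ρ : Equiv.Perm (A i)), D.map (permPayoff i ρ) = D)
    (ρ : ∀ i, Equiv.Perm (A i)) :
    ∀ (L : List (Fin n)), L.Nodup → D.map (PL L ρ) = D := by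
  intro L
  induction L with
  | nil =>
      intro _
      have : (PL ([] : List (Fin n)) ρ : (Fin n → (∀ i, A i) → ℝ) → _) = id := by
        funext u j a; simp [PL]
      rw [this, Measure.map_id]
  | cons i L ih =>
      intro hL
      obtain ⟨hiL, hLnd⟩ := List.nodup_cons.mp hL
      rw [PL_cons i L hiL ρ, ← Measure.map_map (measurable_permPayoff i (ρ i)) (measurable_PL L ρ),
        ih hLnd, hD]

omit [NeZero n] [∀ i, Nonempty (A i)] in
lemma map_Pfull (D : Measure (Fin n → (∀ i, A i) → ℝ))
    (hD : ∀ (i : Fin n) (ρ : Equiv.Perm (A i)), D.map (permPayoff i ρ) = D)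
    (ρ : ∀ i, Equiv.Perm (A i)) : D.map (Pfull ρ) = D := by
  have := map_PL D hD ρ (List.finRange n) (List.nodup_finRange n)
  rwa [PL_finRange] at this

omit [NeZero n] [∀ i, Nonempty (A i)] in
lemma measurable_Pfull (ρ : ∀ i, Equiv.Perm (A i)) :
    Measurable (Pfull ρ : (Fin n → (∀ i, A i) → ℝ) → (Fin n → (∀ i, A i) → ℝ)) :=
  measurable_pi_lambda _ fun j => measurable_pi_lambda _ fun a =>
    (measurable_pi_apply _).comp (measurable_pi_apply j)

/-! ### Convexity of exploitability in the strategy -/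

omit [NeZero n] [∀ i, Nonempty (A i)] in
lemma lin_aux {ι : Type*} [Fintype ι] (π : ι → (∀ i, A i) → ℝ) (N : ℝ)
    (c : (∀ i, A i) → ℝ) :
    ∑ a : ∀ i, A i, ((∑ k, π k a) / N) * c a
      = (∑ k, ∑ a : ∀ i, A i, π k a * c a) / N := by
  rw [Finset.sum_comm, Finset.sum_div]
  refine Finset.sum_congr rfl fun a _ => ?_
  rw [div_mul_eq_mul_div, Finset.sum_mul, Finset.sum_div]

lemma JExpl_avg_le {ι : Type*} [Fintype ι] (u : Fin n → (∀ i, A i) → ℝ)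
    (π : ι → (∀ i, A i) → ℝ) (N : ℝ) (hN : 0 < N) :
    JExpl u (fun a => (∑ k, π k a) / N) ≤ (∑ k, JExpl u (π k)) / N := by
  refine Finset.sup'_le _ _ fun j _ => ?_
  have hJEU : JEU u (fun a => (∑ k, π k a) / N) j = (∑ k, JEU u (π k) j) / N :=
    lin_aux π N _
  have hJBR : ∀ b, JBR u (fun a => (∑ k, π k a) / N) j b = (∑ k, JBR u (π k) j b) / N :=
    fun b => lin_aux π N _
  calc (univ.sup' Finset.univ_nonempty fun b : A j =>
          JBR u (fun a => (∑ k, π k a) / N) j b) - JEU u (fun a => (∑ k, π k a) / N) j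
      ≤ (∑ k, ((univ.sup' Finset.univ_nonempty fun b : A j => JBR u (π k) j b)
            - JEU u (π k) j)) / N := by
        rw [hJEU, Finset.sum_sub_distrib, sub_div]
        refine sub_le_sub ?_ (le_of_eq rfl)
        refine Finset.sup'_le _ _ fun b _ => ?_
        rw [hJBR b, div_le_div_iff_of_pos_right hN]
        exact Finset.sum_le_sum fun k _ =>
          Finset.le_sup' (fun b : A j => JBR u (π k) j b) (Finset.mem_univ b)
    _ ≤ (∑ k, JExpl u (π k)) / N := by
        rw [div_le_div_iff_of_pos_right hN]
        exact Finset.sum_le_sum fun k _ =>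
          Finset.le_sup' (fun j' => (univ.sup' Finset.univ_nonempty fun b : A j' =>
            JBR u (π k) j' b) - JEU u (π k) j') (Finset.mem_univ j)

lemma CEExpl_avg_le {ι : Type*} [Fintype ι] (u : Fin n → (∀ i, A i) → ℝ)
    (π : ι → (∀ i, A i) → ℝ) (N : ℝ) (hN : 0 < N) :
    CEExpl u (fun a => (∑ k, π k a) / N) ≤ (∑ k, CEExpl u (π k)) / N := by
  refine Finset.sup'_le _ _ fun j _ => ?_
  have hJEU : JEU u (fun a => (∑ k, π k a) / N) j = (∑ k, JEU u (π k) j) / N :=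
    lin_aux π N _
  have hCE : ∀ φ : A j → A j, CEdev u (fun a => (∑ k, π k a) / N) j φ
      = (∑ k, CEdev u (π k) j φ) / N := fun φ => lin_aux π N _
  calc (univ.sup' Finset.univ_nonempty fun φ : A j → A j =>
          CEdev u (fun a => (∑ k, π k a) / N) j φ) - JEU u (fun a => (∑ k, π k a) / N) j
      ≤ (∑ k, ((univ.sup' Finset.univ_nonempty fun φ : A j → A j => CEdev u (π k) j φ)
            - JEU u (π k) j)) / N := by
        rw [hJEU, Finset.sum_sub_distrib, sub_div]
        refine sub_le_sub ?_ (le_of_eq rfl)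
        refine Finset.sup'_le _ _ fun φ _ => ?_
        rw [hCE φ, div_le_div_iff_of_pos_right hN]
        exact Finset.sum_le_sum fun k _ =>
          Finset.le_sup' (fun φ : A j → A j => CEdev u (π k) j φ) (Finset.mem_univ φ)
    _ ≤ (∑ k, CEExpl u (π k)) / N := by
        rw [div_le_div_iff_of_pos_right hN]
        exact Finset.sum_le_sum fun k _ =>
          Finset.le_sup' (fun j' => (univ.sup' Finset.univ_nonempty fun φ : A j' → A j' =>
            CEdev u (π k) j' φ) - JEU u (π k) j') (Finset.mem_univ j)

/-! ### Equivariance of exploitability -/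

omit [NeZero n] [∀ i, Nonempty (A i)] in
lemma JEU_equiv (ρ : ∀ i, Equiv.Perm (A i)) (u : Fin n → (∀ i, A i) → ℝ)
    (g : (∀ i, A i) → ℝ) (j : Fin n) :
    JEU u (fun a => g (fun i => ρ i (a i))) j = JEU (Pfull ρ u) g j := by
  simp only [JEU, Pfull]
  refine Fintype.sum_equiv (Equiv.piCongrRight ρ) _ _ fun a => ?_
  have h1 : ⇑(Equiv.piCongrRight ρ) a = fun i => ρ i (a i) := rfl
  rw [h1]
  simp

omit [NeZero n] [∀ i, Nonempty (A i)] in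
lemma JBR_equiv (ρ : ∀ i, Equiv.Perm (A i)) (u : Fin n → (∀ i, A i) → ℝ)
    (g : (∀ i, A i) → ℝ) (j : Fin n) (b : A j) :
    JBR u (fun a => g (fun i => ρ i (a i))) j b = JBR (Pfull ρ u) g j (ρ j b) := by
  simp only [JBR, Pfull]
  refine Fintype.sum_equiv (Equiv.piCongrRight ρ) _ _ fun a => ?_
  have h1 : ⇑(Equiv.piCongrRight ρ) a = fun i => ρ i (a i) := rfl
  rw [h1]
  congr 1
  congr 1
  funext k
  by_cases hk : k = j
  · subst hk
    simp [Function.update_self]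
  · simp [Function.update_of_ne hk]

omit [NeZero n] [∀ i, Nonempty (A i)] in
lemma CEdev_equiv (ρ : ∀ i, Equiv.Perm (A i)) (u : Fin n → (∀ i, A i) → ℝ)
    (g : (∀ i, A i) → ℝ) (j : Fin n) (φ : A j → A j) :
    CEdev u (fun a => g (fun i => ρ i (a i))) j φ
      = CEdev (Pfull ρ u) g j (ρ j ∘ φ ∘ (ρ j).symm) := by
  simp only [CEdev, Pfull]
  refine Fintype.sum_equiv (Equiv.piCongrRight ρ) _ _ fun a => ?_
  have h1 : ⇑(Equiv.piCongrRight ρ) a = fun i => ρ i (a i) := rfl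
  rw [h1]
  congr 1
  congr 1
  funext k
  by_cases hk : k = j
  · subst hk
    simp [Function.update_self]
  · simp [Function.update_of_ne hk]

lemma JExpl_equiv (ρ : ∀ i, Equiv.Perm (A i)) (u : Fin n → (∀ i, A i) → ℝ)
    (g : (∀ i, A i) → ℝ) :
    JExpl u (fun a => g (fun i => ρ i (a i))) = JExpl (Pfull ρ u) g := by
  simp only [JExpl]
  refine Finset.sup'_congr _ rfl fun j _ => ?_
  rw [JEU_equiv]
  congr 1
  apply le_antisymm
  · refine Finset.sup'_le _ _ fun b _ => ?_
    rw [JBR_equiv]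
    exact Finset.le_sup' (fun b : A j => JBR (Pfull ρ u) g j b) (Finset.mem_univ (ρ j b))
  · refine Finset.sup'_le _ _ fun b _ => ?_
    have h := Finset.le_sup'
      (fun b' : A j => JBR u (fun a => g (fun i => ρ i (a i))) j b')
      (Finset.mem_univ ((ρ j).symm b))
    rw [JBR_equiv] at h
    simpa only [Equiv.apply_symm_apply] using h

lemma CEExpl_equiv (ρ : ∀ i, Equiv.Perm (A i)) (u : Fin n → (∀ i, A i) → ℝ)
    (g : (∀ i, A i) → ℝ) :
    CEExpl u (fun a => g (fun i => ρ i (a i))) = CEExpl (Pfull ρ u) g := by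
  simp only [CEExpl]
  refine Finset.sup'_congr _ rfl fun j _ => ?_
  rw [JEU_equiv]
  congr 1
  apply le_antisymm
  · refine Finset.sup'_le _ _ fun φ _ => ?_
    rw [CEdev_equiv]
    exact Finset.le_sup' (fun ψ : A j → A j => CEdev (Pfull ρ u) g j ψ)
      (Finset.mem_univ (ρ j ∘ φ ∘ (ρ j).symm))
  · refine Finset.sup'_le _ _ fun ψ _ => ?_
    have h := Finset.le_sup'
      (fun φ : A j → A j => CEdev u (fun a => g (fun i => ρ i (a i))) j φ)
      (Finset.mem_univ ((ρ j).symm ∘ ψ ∘ ρ j))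
    rw [CEdev_equiv] at h
    have hψ : ρ j ∘ ((ρ j).symm ∘ ψ ∘ ρ j) ∘ (ρ j).symm = ψ := by
      funext x; simp
    rw [hψ] at h
    exact h

/-! ### Main argument -/

lemma main_aux
    (E : (Fin n → (∀ i, A i) → ℝ) → ((∀ i, A i) → ℝ) → ℝ)
    (hconv : ∀ (u : Fin n → (∀ i, A i) → ℝ)
      (π : (∀ i, Equiv.Perm (A i)) → ((∀ i, A i) → ℝ)),
      E u (fun a => (∑ ρ : ∀ i, Equiv.Perm (A i), π ρ a) /
          (Fintype.card (∀ i, Equiv.Perm (A i)) : ℝ))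
        ≤ (∑ ρ : ∀ i, Equiv.Perm (A i), E u (π ρ)) /
          (Fintype.card (∀ i, Equiv.Perm (A i)) : ℝ))
    (hequiv : ∀ (ρ : ∀ i, Equiv.Perm (A i)) (u : Fin n → (∀ i, A i) → ℝ)
      (g : (∀ i, A i) → ℝ),
      E u (fun a => g (fun i => ρ i (a i))) = E (Pfull ρ u) g)
    (D : Measure (Fin n → (∀ i, A i) → ℝ)) [IsProbabilityMeasure D]
    (hD : ∀ (i : Fin n) (ρ : Equiv.Perm (A i)), D.map (permPayoff i ρ) = D)
    (f : (Fin n → (∀ i, A i) → ℝ) → ((∀ i, A i) → ℝ))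
    (h1 : Integrable (fun u => E u (Qall f u)) D)
    (h2 : Integrable (fun u => E u (f u)) D) :
    (∫ u, E u (Qall f u) ∂D) ≤ (∫ u, E u (f u) ∂D) := by
  set N : ℝ := (Fintype.card (∀ i, Equiv.Perm (A i)) : ℝ) with hNdef
  have hN : (0:ℝ) < N := by
    rw [hNdef]
    exact_mod_cast Fintype.card_pos
  have hmeas := fun ρ : ∀ i, Equiv.Perm (A i) => measurable_Pfull (A := A) ρ
  have hmap := fun ρ : ∀ i, Equiv.Perm (A i) => map_Pfull D hD ρ
  -- the composed integrand
  set h : (Fin n → (∀ i, A i) → ℝ) → ℝ := fun u => E u (f u) with hh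
  have hint : ∀ ρ : ∀ i, Equiv.Perm (A i),
      Integrable (fun u => h (Pfull ρ u)) D := by
    intro ρ
    have hmeq := (integrable_map_measure
      (by rw [hmap ρ]; exact h2.aestronglyMeasurable) (hmeas ρ).aemeasurable
      (μ := D) (g := h))
    rw [hmap ρ] at hmeq
    exact hmeq.mp h2
  have hintEq : ∀ ρ : ∀ i, Equiv.Perm (A i),
      (∫ u, h (Pfull ρ u) ∂D) = ∫ u, h u ∂D := by
    intro ρ
    conv_rhs => rw [← hmap ρ]
    rw [integral_map (hmeas ρ).aemeasurable
      (by rw [hmap ρ]; exact h2.aestronglyMeasurable)]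
  -- pointwise inequality
  have hpt : ∀ u, E u (Qall f u) ≤ (∑ ρ : ∀ i, Equiv.Perm (A i), h (Pfull ρ u)) / N := by
    intro u
    have hQ : Qall f u = fun a =>
        (∑ ρ : ∀ i, Equiv.Perm (A i),
          (fun a' => f (Pfull ρ u) (fun i => ρ i (a' i))) a) / N := by
      funext a
      rw [Qall, foldr_Qproj_eq (List.finRange n) f (List.nodup_finRange n) u a]
      rw [hNdef]
      congr 1
      refine Finset.sum_congr rfl fun ρ _ => ?_
      rw [PL_finRange, TL_finRange]
    rw [hQ]
    refine le_trans (hconv u _) ?_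
    rw [div_le_div_iff_of_pos_right hN]
    refine Finset.sum_le_sum fun ρ _ => ?_
    rw [hequiv ρ u (f (Pfull ρ u))]
  -- integrate
  have hintsum : Integrable
      (fun u => (∑ ρ : ∀ i, Equiv.Perm (A i), h (Pfull ρ u)) / N) D := by
    apply Integrable.div_const
    exact integrable_finset_sum _ fun ρ _ => hint ρ
  calc (∫ u, E u (Qall f u) ∂D)
      ≤ ∫ u, (∑ ρ : ∀ i, Equiv.Perm (A i), h (Pfull ρ u)) / N ∂D :=
        integral_mono h1 hintsum hpt
    _ = (∑ ρ : ∀ i, Equiv.Perm (A i), ∫ u, h (Pfull ρ u) ∂D) / N := by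
        rw [integral_div, integral_finset_sum _ fun ρ _ => hint ρ]
    _ = (∑ _ρ : ∀ i, Equiv.Perm (A i), ∫ u, h u ∂D) / N := by
        rw [Finset.sum_congr rfl fun ρ _ => hintEq ρ]
    _ = ∫ u, h u ∂D := by
        rw [Finset.sum_const, Finset.card_univ, nsmul_eq_mul, ← hNdef,
          mul_div_cancel_left₀ _ hN.ne']


/-- if the payoff distribution is invariant under every
single-player permutation of payoffs, orbit averaging weakly decreases expected
(C)CE exploitability. -/
theorem orbit_averaging_decreases_expected_exploitability
    (D : Measure (Fin n → (∀ i, A i) → ℝ)) [IsProbabilityMeasure D]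
    (hD : ∀ (i : Fin n) (ρ : Equiv.Perm (A i)), D.map (permPayoff i ρ) = D)
    (hbound : ∀ᵐ u ∂D, ∀ j a, u j a ∈ Set.Icc (0:ℝ) 1)
    (f : (Fin n → (∀ i, A i) → ℝ) → ((∀ i, A i) → ℝ))
    (h1 : Integrable (fun u => JExpl u (Qall f u)) D)
    (h2 : Integrable (fun u => JExpl u (f u)) D)
    (h3 : Integrable (fun u => CEExpl u (Qall f u)) D)
    (h4 : Integrable (fun u => CEExpl u (f u)) D) :
    (∫ u, JExpl u (Qall f u) ∂D) ≤ (∫ u, JExpl u (f u) ∂D) ∧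
    (∫ u, CEExpl u (Qall f u) ∂D) ≤ (∫ u, CEExpl u (f u) ∂D) := by
  have hNpos : (0:ℝ) < (Fintype.card (∀ i, Equiv.Perm (A i)) : ℝ) := by
    exact_mod_cast Fintype.card_pos
  constructor
  · exact main_aux JExpl (fun u π => JExpl_avg_le u π _ hNpos)
      (fun ρ u g => JExpl_equiv ρ u g) D hD f h1 h2
  · exact main_aux CEExpl (fun u π => CEExpl_avg_le u π _ hNpos)
      (fun ρ u g => CEExpl_equiv ρ u g) D hD f h3 h4
end
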